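/- arXiv:1911.07236 — 6 statements merged into one kernel-verified Lean document; each statement's English description precedes it below -/
import Mathlib

section
/- In a scalable monoid X over a ring R, for all x ∈ X and α, β ∈ R, (αβ)·x = (βα)·x; that is, α·(β·x) = β·(α·x). -/
/-- A scalable monoid over a ring `R`: a monoid `X` with a scaling action
`R → X → X` satisfying `1·x = x`, `α·(β·x) = (αβ)·x` and
`α·(xy) = (α·x)y = x(α·y)`. -/
structure ScalableMonoid (R : Type*) [Ring R] (X : Type*) [Monoid X] where
  smul : R → X → X
  one_smul : ∀ x : X, smul 1 x = x
  mul_smul : ∀ (α β : R) (x : X), smul α (smul β x) = smul (α * β) x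
  smul_mul_left : ∀ (α : R) (x y : X), smul α (x * y) = smul α x * y
  smul_mul_right : ∀ (α : R) (x y : X), smul α (x * y) = x * smul α y

theorem smul_comm_of_scalable {R X : Type*} [Ring R] [Monoid X] (sm : ScalableMonoid R X) :
    ∀ (x : X) (α β : R),
      sm.smul (α * β) x = sm.smul (β * α) x ∧
      sm.smul α (sm.smul β x) = sm.smul β (sm.smul α x) := by
  have hl : ∀ (α : R) (x : X), sm.smul α x = sm.smul α 1 * x := by
    intro α x
    conv_lhs => rw [← one_mul x, sm.smul_mul_left]
  have hr : ∀ (α : R) (x : X), sm.smul α x = x * sm.smul α 1 := by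
    intro α x
    conv_lhs => rw [← mul_one x, sm.smul_mul_right]
  have key : ∀ α β : R, sm.smul (α * β) (1 : X) = sm.smul (β * α) (1 : X) := by
    intro α β
    calc sm.smul (α * β) (1 : X) = sm.smul α (sm.smul β 1) := (sm.mul_smul α β 1).symm
      _ = sm.smul α 1 * sm.smul β 1 := hl α _
      _ = sm.smul β (sm.smul α 1) := (hr β _).symm
      _ = sm.smul (β * α) 1 := sm.mul_smul β α 1
  intro x α β
  have h1 : sm.smul (α * β) x = sm.smul (β * α) x := by
    rw [hl (α * β) x, hl (β * α) x, key]
  exact ⟨h1, by rw [sm.mul_smul, sm.mul_smul, h1]⟩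
end

section
/- In a scalable monoid X over R, we have 0·x = 0·y if and only if x ~ y, where x ~ y means α·x = β·y for some α, β ∈ R. -/
theorem zero_smul_eq_iff_commensurable {R X : Type*} [Ring R] [Monoid X]
    (sm : ScalableMonoid R X) :
    ∀ x y : X, sm.smul 0 x = sm.smul 0 y ↔ ∃ α β : R, sm.smul α x = sm.smul β y := by
  intro x y
  constructor
  · intro h; exact ⟨0, 0, h⟩
  · rintro ⟨α, β, h⟩
    have : sm.smul 0 (sm.smul α x) = sm.smul 0 (sm.smul β y) := by rw [h]
    simpa [sm.mul_smul] using this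
end

section
/- Let X, Y be scalable monoids over R. Define (x₁, y₁) ∼⊗ (x₂, y₂) iff there exist α, β ∈ R with α·x₁ = β·x₂ and β·y₁ = α·y₂. Then ∼⊗ is an equivalence relation on X × Y. -/
lemma ScalableMonoid.smul_eq {R X : Type*} [Ring R] [Monoid X]
    (sm : ScalableMonoid R X) (α : R) (x : X) :
    sm.smul α x = sm.smul α 1 * x := by
  conv_lhs => rw [← one_mul x, sm.smul_mul_left]

lemma ScalableMonoid.smul_comm {R X : Type*} [Ring R] [Monoid X]
    (sm : ScalableMonoid R X) (α β : R) (x : X) :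
    sm.smul α (sm.smul β x) = sm.smul β (sm.smul α x) := by
  have hab : sm.smul α 1 * sm.smul β 1 = sm.smul β 1 * sm.smul α 1 := by
    have h1 : sm.smul α (sm.smul β 1 * 1) = sm.smul α (sm.smul β 1) * 1 :=
      sm.smul_mul_left _ _ _
    have h2 : sm.smul α (sm.smul β 1 * 1) = sm.smul β 1 * sm.smul α 1 :=
      sm.smul_mul_right _ _ _
    rw [← h2, h1, mul_one, ← sm.smul_eq]
  calc sm.smul α (sm.smul β x) = sm.smul α 1 * (sm.smul β 1 * x) := by
        rw [← sm.smul_eq, ← sm.smul_eq]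
    _ = sm.smul β 1 * (sm.smul α 1 * x) := by rw [← mul_assoc, hab, mul_assoc]
    _ = sm.smul β (sm.smul α x) := by rw [← sm.smul_eq, ← sm.smul_eq]

theorem tensor_rel_equivalence {R X Y : Type*} [Ring R] [Monoid X] [Monoid Y]
    (sm : ScalableMonoid R X) (sn : ScalableMonoid R Y) :
    Equivalence (fun p q : X × Y =>
      ∃ α β : R, sm.smul α p.1 = sm.smul β q.1 ∧ sn.smul β p.2 = sn.smul α q.2) := by
  constructor
  · intro p; exact ⟨1, 1, rfl, rfl⟩
  · rintro p q ⟨α, β, h1, h2⟩; exact ⟨β, α, h1.symm, h2.symm⟩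
  · rintro p q r ⟨α, β, h1, h2⟩ ⟨γ, δ, h3, h4⟩
    refine ⟨γ * α, β * δ, ?_, ?_⟩
    · rw [← sm.mul_smul, ← sm.mul_smul, h1, sm.smul_comm, h3, sm.smul_comm]
    · rw [← sn.mul_smul, ← sn.mul_smul, sn.smul_comm β, h2, sn.smul_comm, h4,
        sn.smul_comm]
end

section
/- If there exists a unit element u for some non-trivial orbit class C in a scalable monoid X over a ring R, then R is non-trivial (0 ≠ 1) and for all α, β ∈ R, (αβ)·u = (βα)·u. -/
theorem unit_element_ring_nontrivial_and_comm {R X : Type*} [Ring R] [Monoid X]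
    (sm : ScalableMonoid R X) (u : X)
    (hunit : ∀ x : X, (∃ α β : R, sm.smul α x = sm.smul β u) →
      ∃! ρ : R, x = sm.smul ρ u)
    (hnontrivial : ∃ x : X, (∃ α β : R, sm.smul α x = sm.smul β u) ∧ x ≠ sm.smul 0 u) :
    (0 : R) ≠ 1 ∧ ∀ α β : R, sm.smul (α * β) u = sm.smul (β * α) u := by
  constructor
  · intro h01
    obtain ⟨x, hx, hne⟩ := hnontrivial
    obtain ⟨ρ, hρ, _⟩ := hunit x hx
    have : ρ = 0 := by
      have := h01 ▸ (mul_one ρ)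
      simpa [mul_zero] using this.symm
    exact hne (this ▸ hρ)
  · intro α β
    have key : sm.smul (α * β) (1 : X) = sm.smul (β * α) (1 : X) := by
      have h1 : sm.smul α (1 : X) * sm.smul β (1 : X) = sm.smul (α * β) (1 : X) := by
        rw [← sm.smul_mul_left α (1:X), one_mul, sm.mul_smul]
      have h2 : sm.smul α (1 : X) * sm.smul β (1 : X) = sm.smul (β * α) (1 : X) := by
        rw [← sm.smul_mul_right β (sm.smul α (1:X)) (1:X), mul_one, sm.mul_smul]
      rw [← h1, h2]
    calc sm.smul (α * β) u = sm.smul (α * β) (1 * u) := by rw [one_mul]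
      _ = sm.smul (α * β) 1 * u := sm.smul_mul_left _ _ _
      _ = sm.smul (β * α) 1 * u := by rw [key]
      _ = sm.smul (β * α) (1 * u) := (sm.smul_mul_left _ _ _).symm
      _ = sm.smul (β * α) u := by rw [one_mul]
end

section
/- Let C be an orbit class in a scalable monoid over R with unit elements u and u'. If ρ·u = ρ'·u' and σ·u = σ'·u', then (ρ+σ)·u = (ρ'+σ')·u'. Hence addition on C defined via a unit element is well-defined. -/
theorem add_well_defined_on_orbit_class {R X : Type*} [Ring R] [Monoid X]
    (sm : ScalableMonoid R X) (u u' : X)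
    (hu : ∀ x : X, (∃ α β : R, sm.smul α x = sm.smul β u) →
      ∃! ρ : R, x = sm.smul ρ u)
    (hu' : ∀ x : X, (∃ α β : R, sm.smul α x = sm.smul β u') →
      ∃! ρ : R, x = sm.smul ρ u')
    (hsame : ∃ α β : R, sm.smul α u = sm.smul β u')
    (ρ ρ' σ σ' : R)
    (hρ : sm.smul ρ u = sm.smul ρ' u')
    (hσ : sm.smul σ u = sm.smul σ' u') :
    sm.smul (ρ + σ) u = sm.smul (ρ' + σ') u' := by
  obtain ⟨α, β, hαβ⟩ := hsame
  obtain ⟨τ, hτ, _⟩ := hu u' ⟨β, α, hαβ.symm⟩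
  have key : ∀ a b : R, sm.smul a u = sm.smul b u' → a = b * τ := by
    intro a b h
    obtain ⟨r, hr, hr'⟩ := hu (sm.smul a u) ⟨1, a, by rw [sm.one_smul]⟩
    have h1 : a = r := hr' a rfl
    have h2 : b * τ = r := hr' (b * τ) (by rw [h, hτ, sm.mul_smul])
    rw [h1, h2]
  have h1 := key ρ ρ' hρ
  have h2 := key σ σ' hσ
  rw [h1, h2, ← add_mul, ← sm.mul_smul, ← hτ]
end

section
/- In the ring-monoid R ⊠ M over a commutative ring R (multiplication ⟨α,x⟩⟨β,y⟩ = ⟨αβ,xy⟩, scaling λ·⟨α,x⟩ = ⟨λα,x⟩), the set U = {⟨1, x⟩ : x ∈ M} is a coherent system of unit elements: U is a submonoid, every element of R × M is of the form ρ·u for a unique ρ given u ∈ U with u ~ it, every element is commensurable with some element of U, and distinct elements of U are incommensurable. -/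
/-- In the ring-monoid `R ⊠ M` over a commutative ring, the set
`U = {⟨1, x⟩ : x ∈ M}` is a coherent system of unit elements: it is a
submonoid, it is dense (every element is commensurable with a member of `U`),
every member of `U` is a unit element for its orbit class, and `U` is sparse
(distinct members of `U` are incommensurable). -/
theorem ring_monoid_coherent_units {R M : Type*} [CommRing R] [Monoid M] :
    ((1 : R × M) ∈ {p : R × M | p.1 = 1}) ∧
    (∀ u ∈ {p : R × M | p.1 = 1}, ∀ v ∈ {p : R × M | p.1 = 1},
        u * v ∈ {p : R × M | p.1 = 1}) ∧
    (∀ p : R × M, ∃ u ∈ {p : R × M | p.1 = 1},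
        ∃ α β : R, ((α * p.1, p.2) : R × M) = (β * u.1, u.2)) ∧
    (∀ u ∈ {p : R × M | p.1 = 1}, ∀ p : R × M,
        (∃ α β : R, ((α * p.1, p.2) : R × M) = (β * u.1, u.2)) →
        ∃! ρ : R, p = ((ρ * u.1, u.2) : R × M)) ∧
    (∀ u ∈ {p : R × M | p.1 = 1}, ∀ v ∈ {p : R × M | p.1 = 1},
        (∃ α β : R, ((α * u.1, u.2) : R × M) = (β * v.1, v.2)) → u = v) := by
  refine ⟨rfl, ?_, ?_, ?_, ?_⟩
  · intro u hu v hv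
    simp only [Set.mem_setOf_eq] at *
    simp [Prod.fst_mul, hu, hv]
  · intro p
    exact ⟨(1, p.2), rfl, 1, p.1, by simp [mul_comm]⟩
  · intro u hu p ⟨α, β, h⟩
    simp only [Set.mem_setOf_eq] at hu
    have h2 : p.2 = u.2 := (Prod.ext_iff.mp h).2
    exact ⟨p.1, Prod.ext (by simp [hu]) h2, fun ρ hρ => by simp [hρ, hu]⟩
  · intro u hu v hv ⟨α, β, h⟩
    have h2 : u.2 = v.2 := (Prod.ext_iff.mp h).2
    simp only [Set.mem_setOf_eq] at hu hv
    exact Prod.ext (hu.trans hv.symm) h2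
end
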